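/- For every real t with 0 < t < 1, the Gauss hypergeometric function satisfies ₂F₁(2, 2; 9/2; t) = −35(11t − 15)/(12t³) − 35(2t² − 7t + 5)·arcsin(√t) / (4 t^{7/2} √(1−t)). -/

import Mathlib

/-!
Let `aₙ` be the coefficients of `₂F₁(1, 1; 3/2; ·)`, so that `(2n + 2) aₙ = (2n + 3) aₙ₊₁`. This
recurrence makes the odd series `H x = ∑ aₙ x^(2n+1)` satisfy `(1 - x²) H' - x H = 1` by
telescoping, hence `√(1 - x²) H` has the derivative `1 / √(1 - x²)` of `arcsin` and vanishes at `0`: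
`arcsin x = √(1 - x²) H x`, i.e. `₂F₁(1, 1; 3/2; t) = arcsin √t / √(t (1 - t))`.

The coefficients of `₂F₁(2, 2; 9/2; ·)` are the combination `35/4 (-2 aₙ₊₁ + 7 aₙ₊₂ - 5 aₙ₊₃)` of
shifted `aₙ` (a contiguous relation, checked by induction on the first-order recurrences), and
`∑ aₙ₊ₖ tⁿ = t⁻ᵏ (₂F₁(1, 1; 3/2; t) - a₀ - ⋯ - aₖ₋₁ tᵏ⁻¹)` turns this combination into the closed
form.
-/

noncomputable section
open Complex

/-- The Gauss hypergeometric series `₂F₁(a, b; c; t)`,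
`∑_{n≥0} ((a)_n (b)_n / (c)_n) tⁿ/n!` with Pochhammer symbols `(x)_n`. -/
def hyp2F1 (a b c t : ℂ) : ℂ :=
  ∑' n : ℕ, ((∏ i ∈ Finset.range n, ((a + i) * (b + i) / (c + i))) / (Nat.factorial n : ℂ)) * t ^ n

theorem summable_mul_pow_of_abs_le_one {c : ℕ → ℝ} (hc : ∀ n, |c n| ≤ 1) {x : ℝ}
    (hx : |x| < 1) : Summable fun n => c n * x ^ n := by
  refine (summable_geometric_of_lt_one (abs_nonneg x) hx).of_norm_bounded fun n => ?_
  rw [Real.norm_eq_abs, abs_mul, abs_pow]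
  exact mul_le_of_le_one_left (by positivity) (hc n)

theorem summable_mul_pow_two_mul_add_one {c : ℕ → ℝ} (hc : ∀ n, |c n| ≤ 1) {x : ℝ}
    (hx : |x| < 1) : Summable fun n => c n * x ^ (2 * n + 1) := by
  have hx2 : |x ^ 2| < 1 := by rw [abs_pow]; exact pow_lt_one₀ (abs_nonneg x) hx two_ne_zero
  exact ((summable_mul_pow_of_abs_le_one hc hx2).mul_left x).congr fun n => by ring

theorem summable_two_mul_add_one_mul_geometric {q : ℝ} (hq : |q| < 1) :
    Summable fun n : ℕ => (2 * n + 1) * q ^ n := by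
  have hlin : Summable fun n : ℕ => (n : ℝ) ^ 1 * q ^ n :=
    summable_pow_mul_geometric_of_norm_lt_one 1 hq
  have hgeom : Summable fun n : ℕ => q ^ n := summable_geometric_of_abs_lt_one hq
  exact ((hlin.mul_left 2).add hgeom).congr fun n => by ring

theorem abs_two_mul_add_one_mul_mul_pow_two_mul_le {c : ℕ → ℝ} (hc : ∀ n, |c n| ≤ 1) (n : ℕ)
    {y r : ℝ} (hy : |y| ≤ r) : |(2 * n + 1) * c n * y ^ (2 * n)| ≤ (2 * n + 1) * (r ^ 2) ^ n := by
  rw [abs_mul, abs_mul, abs_pow, ← pow_mul, abs_of_nonneg (by positivity : (0 : ℝ) ≤ 2 * n + 1)]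
  gcongr
  exact mul_le_of_le_one_right (by positivity) (hc n)

theorem summable_two_mul_add_one_mul_mul_pow_two_mul {c : ℕ → ℝ} (hc : ∀ n, |c n| ≤ 1) {x : ℝ}
    (hx : |x| < 1) : Summable fun n : ℕ => (2 * n + 1) * c n * x ^ (2 * n) := by
  have hx2 : |(|x|) ^ 2| < 1 := by
    rw [abs_pow, abs_abs]; exact pow_lt_one₀ (abs_nonneg x) hx two_ne_zero
  exact (summable_two_mul_add_one_mul_geometric hx2).of_norm_bounded fun n =>
    abs_two_mul_add_one_mul_mul_pow_two_mul_le hc n le_rfl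

theorem hasDerivAt_tsum_mul_pow_two_mul_add_one {c : ℕ → ℝ} (hc : ∀ n, |c n| ≤ 1) {x : ℝ}
    (hx : |x| < 1) :
    HasDerivAt (fun y => ∑' n, c n * y ^ (2 * n + 1))
      (∑' n, (2 * n + 1) * c n * x ^ (2 * n)) x := by
  obtain ⟨r, hxr, hr1⟩ := exists_between hx
  have hr0 : 0 < r := (abs_nonneg x).trans_lt hxr
  have hr2 : |r ^ 2| < 1 := by
    rw [abs_pow, abs_of_pos hr0]; exact pow_lt_one₀ hr0.le hr1 two_ne_zero
  refine hasDerivAt_tsum_of_isPreconnected (g := fun n y => c n * y ^ (2 * n + 1))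
    (g' := fun n y => (2 * n + 1) * c n * y ^ (2 * n)) (summable_two_mul_add_one_mul_geometric hr2)
    isOpen_Ioo (convex_Ioo (-r) r).isPreconnected (fun n y _ => ?_)
    (fun n y hy => abs_two_mul_add_one_mul_mul_pow_two_mul_le hc n (abs_le.mpr ⟨hy.1.le, hy.2.le⟩))
    (y₀ := 0) (by simpa using hr0) (by simp) (abs_lt.mp hxr)
  refine ((hasDerivAt_pow (2 * n + 1) y).const_mul (c n)).congr_deriv ?_
  rw [Nat.add_sub_cancel]
  push_cast
  ring

theorem tsum_mul_pow_eq_add_mul_tsum_succ {c : ℕ → ℝ} {t : ℝ}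
    (h : Summable fun n => c n * t ^ n) :
    ∑' n, c n * t ^ n = c 0 + t * ∑' n, c (n + 1) * t ^ n := by
  rw [h.tsum_eq_zero_add, ← tsum_mul_left]
  simp only [pow_zero, mul_one, pow_succ]
  exact congrArg _ (tsum_congr fun n => by ring)

def hyp2F1Coeff (a b c : ℝ) (n : ℕ) : ℝ :=
  (∏ i ∈ Finset.range n, (a + i) * (b + i) / (c + i)) / n.factorial

theorem hyp2F1_ofReal (a b c t : ℝ) :
    hyp2F1 a b c t = ((∑' n, hyp2F1Coeff a b c n * t ^ n : ℝ) : ℂ) := by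
  rw [hyp2F1, ofReal_tsum]
  refine tsum_congr fun n => ?_
  simp [hyp2F1Coeff]

theorem hyp2F1Coeff_zero (a b c : ℝ) : hyp2F1Coeff a b c 0 = 1 := by
  simp [hyp2F1Coeff]

theorem hyp2F1Coeff_succ (a b c : ℝ) (n : ℕ) :
    hyp2F1Coeff a b c (n + 1) =
      (a + n) * (b + n) / ((c + n) * (n + 1)) * hyp2F1Coeff a b c n := by
  simp only [hyp2F1Coeff, Finset.prod_range_succ, Nat.factorial_succ, Nat.cast_mul, Nat.cast_succ]
  field_simp

def arcsinCoeff (n : ℕ) : ℝ := hyp2F1Coeff 1 1 (3 / 2) n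

theorem arcsinCoeff_zero : arcsinCoeff 0 = 1 := hyp2F1Coeff_zero _ _ _

theorem arcsinCoeff_succ (n : ℕ) :
    arcsinCoeff (n + 1) = (2 * n + 2) / (2 * n + 3) * arcsinCoeff n := by
  rw [arcsinCoeff, hyp2F1Coeff_succ, ← arcsinCoeff]
  congr 1
  field_simp
  ring

theorem arcsinCoeff_nonneg (n : ℕ) : 0 ≤ arcsinCoeff n := by
  unfold arcsinCoeff hyp2F1Coeff
  positivity

theorem arcsinCoeff_le_one (n : ℕ) : arcsinCoeff n ≤ 1 := by
  induction n with
  | zero => rw [arcsinCoeff_zero]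
  | succ n ih =>
    have hratio : (2 * n + 2) / (2 * n + 3 : ℝ) ≤ 1 := by
      rw [div_le_one (by positivity)]; linarith
    rw [arcsinCoeff_succ]
    exact mul_le_one₀ hratio (arcsinCoeff_nonneg n) ih

theorem abs_arcsinCoeff_le_one (n : ℕ) : |arcsinCoeff n| ≤ 1 := by
  rw [abs_of_nonneg (arcsinCoeff_nonneg n)]
  exact arcsinCoeff_le_one n

theorem tsum_arcsinCoeff_ode {x : ℝ} (hx : |x| < 1) :
    (1 - x ^ 2) * ∑' n : ℕ, (2 * n + 1) * arcsinCoeff n * x ^ (2 * n) -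
      x * ∑' n, arcsinCoeff n * x ^ (2 * n + 1) = 1 := by
  set u : ℕ → ℝ := fun n => (2 * n + 1) * arcsinCoeff n * x ^ (2 * n) with hu
  have hsum_u : Summable u := summable_two_mul_add_one_mul_mul_pow_two_mul abs_arcsinCoeff_le_one hx
  have hsum_odd := summable_mul_pow_two_mul_add_one abs_arcsinCoeff_le_one hx
  have htelescope : ∀ n : ℕ,
      (1 - x ^ 2) * u n - x * (arcsinCoeff n * x ^ (2 * n + 1)) = u n - u (n + 1) := by
    intro n
    simp only [hu, arcsinCoeff_succ]
    rw [show 2 * (n + 1) = 2 * n + 1 + 1 by ring, pow_succ, pow_succ]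
    push_cast
    field_simp
    ring
  rw [← tsum_mul_left, ← tsum_mul_left, ← (hsum_u.mul_left _).tsum_sub (hsum_odd.mul_left _),
    tsum_congr htelescope, hsum_u.tsum_sub ((summable_nat_add_iff 1).mpr hsum_u),
    hsum_u.tsum_eq_zero_add]
  simp [hu, arcsinCoeff_zero]

theorem hasDerivAt_sqrt_one_sub_sq_mul_tsum_arcsinCoeff {x : ℝ} (hx : |x| < 1) :
    HasDerivAt (fun y => √(1 - y ^ 2) * ∑' n, arcsinCoeff n * y ^ (2 * n + 1))
      (1 / √(1 - x ^ 2)) x := by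
  have hpos : 0 < 1 - x ^ 2 := by nlinarith [sq_abs x, abs_nonneg x]
  have hsqrt := ((hasDerivAt_pow 2 x).const_sub 1).sqrt hpos.ne'
  have hseries := hasDerivAt_tsum_mul_pow_two_mul_add_one abs_arcsinCoeff_le_one hx
  refine (hsqrt.mul hseries).congr_deriv ?_
  have hs : √(1 - x ^ 2) ^ 2 = 1 - x ^ 2 := Real.sq_sqrt hpos.le
  have hs0 : √(1 - x ^ 2) ≠ 0 := (Real.sqrt_pos.mpr hpos).ne'
  norm_num
  field_simp
  linear_combination tsum_arcsinCoeff_ode hx +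
    (∑' n : ℕ, (2 * n + 1) * arcsinCoeff n * x ^ (2 * n)) * hs

theorem arcsin_eq_sqrt_one_sub_sq_mul_tsum_arcsinCoeff {x : ℝ} (hx : |x| < 1) :
    Real.arcsin x = √(1 - x ^ 2) * ∑' n, arcsinCoeff n * x ^ (2 * n + 1) := by
  have harcsin : ∀ y ∈ Set.Ioo (-1 : ℝ) 1, HasDerivAt Real.arcsin (1 / √(1 - y ^ 2)) y :=
    fun y hy => Real.hasDerivAt_arcsin hy.1.ne' hy.2.ne
  have hseries : ∀ y ∈ Set.Ioo (-1 : ℝ) 1, HasDerivAt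
      (fun y => √(1 - y ^ 2) * ∑' n, arcsinCoeff n * y ^ (2 * n + 1)) (1 / √(1 - y ^ 2)) y :=
    fun y hy => hasDerivAt_sqrt_one_sub_sq_mul_tsum_arcsinCoeff (abs_lt.mpr hy)
  exact isOpen_Ioo.eqOn_of_deriv_eq (convex_Ioo _ _).isPreconnected
    (fun y hy => (harcsin y hy).differentiableAt.differentiableWithinAt)
    (fun y hy => (hseries y hy).differentiableAt.differentiableWithinAt)
    (fun y hy => (harcsin y hy).deriv.trans (hseries y hy).deriv.symm)
    (x := 0) (by norm_num) (by simp) (abs_lt.mp hx)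

theorem arcsin_sqrt_eq_sqrt_mul_sqrt_one_sub_mul_tsum_arcsinCoeff {t : ℝ} (h0 : 0 ≤ t)
    (h1 : t < 1) : Real.arcsin √t = √t * √(1 - t) * ∑' n, arcsinCoeff n * t ^ n := by
  have hst : √t ^ 2 = t := Real.sq_sqrt h0
  have hlt : |√t| < 1 := by
    rw [abs_of_nonneg (Real.sqrt_nonneg t)]
    simpa using Real.sqrt_lt_sqrt h0 h1
  have hodd : ∑' n, arcsinCoeff n * √t ^ (2 * n + 1) = √t * ∑' n, arcsinCoeff n * t ^ n := by
    rw [← tsum_mul_left]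
    exact tsum_congr fun n => by rw [pow_succ, pow_mul, hst]; ring
  rw [arcsin_eq_sqrt_one_sub_sq_mul_tsum_arcsinCoeff hlt, hst, hodd]
  ring

theorem hyp2F1Coeff_two_two_nine_half (n : ℕ) :
    hyp2F1Coeff 2 2 (9 / 2) n =
      35 / 4 * (-2 * arcsinCoeff (n + 1) + 7 * arcsinCoeff (n + 2) - 5 * arcsinCoeff (n + 3)) := by
  induction n with
  | zero => norm_num [hyp2F1Coeff_zero, arcsinCoeff_succ, arcsinCoeff_zero]
  | succ n ih =>
    rw [hyp2F1Coeff_succ, ih, arcsinCoeff_succ (n + 3), arcsinCoeff_succ (n + 2),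
      arcsinCoeff_succ (n + 1)]
    push_cast
    field_simp
    ring

theorem tsum_hyp2F1Coeff_two_two_nine_half {t : ℝ} (h0 : 0 < t) (h1 : t < 1) :
    ∑' n, hyp2F1Coeff 2 2 (9 / 2) n * t ^ n =
      -(35 * (11 * t - 15)) / (12 * t ^ 3) -
        35 * (2 * t ^ 2 - 7 * t + 5) * Real.arcsin √t / (4 * t ^ ((7 : ℝ) / 2) * √(1 - t)) := by
  set T : ℕ → ℝ := fun k => ∑' n, arcsinCoeff (n + k) * t ^ n with hT
  have hsum : ∀ k, Summable fun n => arcsinCoeff (n + k) * t ^ n := fun k =>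
    summable_mul_pow_of_abs_le_one (fun n => abs_arcsinCoeff_le_one _) (by rwa [abs_of_pos h0])
  have hshift : ∀ k, T k = arcsinCoeff k + t * T (k + 1) := fun k => by
    simp only [hT, tsum_mul_pow_eq_add_mul_tsum_succ (hsum k), zero_add, add_right_comm _ 1 k,
      add_assoc]
  have hcombination : HasSum (fun n => hyp2F1Coeff 2 2 (9 / 2) n * t ^ n)
      (35 / 4 * (-2 * T 1 + 7 * T 2 - 5 * T 3)) := by
    have hterm : (fun n => hyp2F1Coeff 2 2 (9 / 2) n * t ^ n) = fun n => 35 / 4 *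
        (-2 * (arcsinCoeff (n + 1) * t ^ n) + 7 * (arcsinCoeff (n + 2) * t ^ n) -
          5 * (arcsinCoeff (n + 3) * t ^ n)) := by
      ext n
      rw [hyp2F1Coeff_two_two_nine_half]
      ring
    rw [hterm]
    exact ((((hsum 1).hasSum.mul_left (-2)).add ((hsum 2).hasSum.mul_left 7)).sub
      ((hsum 3).hasSum.mul_left 5)).mul_left (35 / 4)
  have harcsin : Real.arcsin √t = √t * √(1 - t) * T 0 := by
    simpa only [hT, add_zero] using
      arcsin_sqrt_eq_sqrt_mul_sqrt_one_sub_mul_tsum_arcsinCoeff h0.le h1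
  have hpow : t ^ ((7 : ℝ) / 2) = t ^ 3 * √t := by
    rw [show (7 : ℝ) / 2 = (3 : ℕ) + 1 / 2 by norm_num, Real.rpow_add h0, Real.rpow_natCast,
      Real.sqrt_eq_rpow]
  have hs : 0 < √t := Real.sqrt_pos.mpr h0
  have hs1 : 0 < √(1 - t) := Real.sqrt_pos.mpr (by linarith)
  rw [hcombination.tsum_eq, harcsin, hpow, hshift 0, hshift 1, hshift 2]
  norm_num [arcsinCoeff_succ, arcsinCoeff_zero]
  field_simp
  ring

theorem hyp2F1_two_two_nine_half (t : ℝ) (h0 : 0 < t) (h1 : t < 1) :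
    hyp2F1 2 2 (9 / 2) (t : ℂ) =
      -(((35 * (11 * t - 15)) : ℝ) : ℂ) / ((12 * t ^ 3 : ℝ) : ℂ) -
        (((35 * (2 * t ^ 2 - 7 * t + 5) * Real.arcsin (Real.sqrt t)) : ℝ) : ℂ) /
          (((4 * t ^ ((7 : ℝ) / 2) * Real.sqrt (1 - t)) : ℝ) : ℂ) := by
  have h := congrArg ((↑) : ℝ → ℂ) (tsum_hyp2F1Coeff_two_two_nine_half h0 h1)
  rw [← hyp2F1_ofReal] at h
  push_cast at h ⊢
  exact h
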